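/- arXiv:2310.19075 — 6 statements merged into one kernel-verified Lean document; each statement's English description precedes it below -/
import Mathlib

section
/- Let u_t be L_u-Lipschitz in x for every t. Consider the scale-time midpoint (RK2-Bespoke) update step_x(t_i, x) = (s_i/s_{i+1})·x + (h/s_{i+1})·[ (ṡ_{i+½}/s_{i+½})·z(x) + ṫ_{i+½}·s_{i+½}·u_{t_{i+½}}(z(x)/s_{i+½}) ], where z(x) = (s_i + (h/2)·ṡ_i)·x + (h/2)·s_i·ṫ_i·u_{t_i}(x). Then step_x(t_i, ·) is Lipschitz with constant (s_i/s_{i+1})·[1 + h·L̄(r_{i+½})·(1 + (h/2)·L̄(r_i))], where L̄(r) = |ṡ_r|/s_r + ṫ_r·L_u. -/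
/-- RK2-Bespoke Lipschitz constant: the scale-time midpoint update
`step_x(t_i, x) = (s_i/s_{i+1})·x + (h/s_{i+1})·[(ṡ_{i+½}/s_{i+½})·z(x)
  + ṫ_{i+½}·s_{i+½}·u_{t_{i+½}}(z(x)/s_{i+½})]`,
with `z(x) = (s_i + (h/2)ṡ_i)·x + (h/2)·s_i·ṫ_i·u_{t_i}(x)`, is Lipschitz with constant
`(s_i/s_{i+1})·[1 + h·L̄(r_{i+½})·(1 + (h/2)·L̄(r_i))]` where `L̄(r) = |ṡ_r|/s_r + ṫ_r·L_u`. -/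
theorem rk2_bespoke_lipschitz {E : Type*} [NormedAddCommGroup E] [NormedSpace ℝ E]
    (u : ℝ → E → E) (Lu : ℝ) (hLu : 0 < Lu)
    (hu : ∀ t : ℝ, ∀ x y : E, ‖u t x - u t y‖ ≤ Lu * ‖x - y‖)
    (ti tih si sih si1 sdi sdih tdi tdih h : ℝ)
    (hsi : 0 < si) (hsih : 0 < sih) (hsi1 : 0 < si1)
    (htdi : 0 < tdi) (htdih : 0 < tdih) (hh : 0 < h)
    (z : E → E)
    (hz : ∀ x : E, z x = (si + (h / 2) * sdi) • x + ((h / 2) * si * tdi) • u ti x) :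
    ∀ x y : E,
      ‖((si / si1) • x +
            (h / si1) •
              ((sdih / sih) • z x + (tdih * sih) • u tih (sih⁻¹ • z x))) -
          ((si / si1) • y +
            (h / si1) •
              ((sdih / sih) • z y + (tdih * sih) • u tih (sih⁻¹ • z y)))‖ ≤
        (si / si1) *
            (1 + h * (|sdih| / sih + tdih * Lu) * (1 + (h / 2) * (|sdi| / si + tdi * Lu))) *
          ‖x - y‖ := by
  intro x y
  have hzd : z x - z y = (si + h / 2 * sdi) • (x - y)
      + (h / 2 * si * tdi) • (u ti x - u ti y) := by
    rw [hz, hz]; module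
  set A := ‖x - y‖ with hA
  have hA0 : 0 ≤ A := norm_nonneg _
  have hB : ‖z x - z y‖ ≤ (si * (1 + h / 2 * (|sdi| / si + tdi * Lu))) * A := by
    rw [hzd]
    have h1 : ‖(si + h / 2 * sdi) • (x - y)‖ = |si + h / 2 * sdi| * A := by
      rw [norm_smul, Real.norm_eq_abs]
    have h2 : ‖(h / 2 * si * tdi) • (u ti x - u ti y)‖ ≤ (h / 2 * si * tdi) * (Lu * A) := by
      rw [norm_smul, Real.norm_eq_abs, abs_of_nonneg (by positivity)]
      exact mul_le_mul_of_nonneg_left (hu ti x y) (by positivity)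
    have h3 : |si + h / 2 * sdi| ≤ si + h / 2 * |sdi| := by
      calc |si + h / 2 * sdi| ≤ |si| + |h / 2 * sdi| := abs_add_le _ _
        _ = si + h / 2 * |sdi| := by
          rw [abs_of_pos hsi, abs_mul, abs_of_nonneg (by positivity : (0:ℝ) ≤ h / 2)]
    calc ‖(si + h / 2 * sdi) • (x - y) + (h / 2 * si * tdi) • (u ti x - u ti y)‖
        ≤ ‖(si + h / 2 * sdi) • (x - y)‖ + ‖(h / 2 * si * tdi) • (u ti x - u ti y)‖ :=
          norm_add_le _ _
      _ ≤ (si + h / 2 * |sdi|) * A + h / 2 * si * tdi * (Lu * A) := by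
          rw [h1]
          exact add_le_add (mul_le_mul_of_nonneg_right h3 hA0) h2
      _ = (si * (1 + h / 2 * (|sdi| / si + tdi * Lu))) * A := by
          field_simp; ring
  set B := ‖z x - z y‖ with hBdef
  have hB0 : 0 ≤ B := norm_nonneg _
  have hC : ‖u tih (sih⁻¹ • z x) - u tih (sih⁻¹ • z y)‖ ≤ Lu * (sih⁻¹ * B) := by
    have := hu tih (sih⁻¹ • z x) (sih⁻¹ • z y)
    rwa [← smul_sub, norm_smul, Real.norm_eq_abs,
      abs_of_pos (inv_pos.mpr hsih)] at this
  set C := ‖u tih (sih⁻¹ • z x) - u tih (sih⁻¹ • z y)‖ with hCdef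
  have hD : ((si / si1) • x + (h / si1) • ((sdih / sih) • z x + (tdih * sih) • u tih (sih⁻¹ • z x)))
      - ((si / si1) • y + (h / si1) • ((sdih / sih) • z y + (tdih * sih) • u tih (sih⁻¹ • z y)))
      = (si / si1) • (x - y) + (h / si1) • ((sdih / sih) • (z x - z y)
        + (tdih * sih) • (u tih (sih⁻¹ • z x) - u tih (sih⁻¹ • z y))) := by
    module
  rw [hD]
  have key : ‖(si / si1) • (x - y) + (h / si1) • ((sdih / sih) • (z x - z y)
      + (tdih * sih) • (u tih (sih⁻¹ • z x) - u tih (sih⁻¹ • z y)))‖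
      ≤ (si / si1) * A + (h / si1) * ((|sdih| / sih) * B + (tdih * sih) * C) := by
    calc ‖(si / si1) • (x - y) + (h / si1) • ((sdih / sih) • (z x - z y)
        + (tdih * sih) • (u tih (sih⁻¹ • z x) - u tih (sih⁻¹ • z y)))‖
        ≤ ‖(si / si1) • (x - y)‖ + ‖(h / si1) • ((sdih / sih) • (z x - z y)
          + (tdih * sih) • (u tih (sih⁻¹ • z x) - u tih (sih⁻¹ • z y)))‖ := norm_add_le _ _
      _ ≤ (si / si1) * A + (h / si1) * ((|sdih| / sih) * B + (tdih * sih) * C) := by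
          gcongr ?_ + ?_
          · rw [norm_smul, Real.norm_eq_abs, abs_of_pos (by positivity)]
          · rw [norm_smul, Real.norm_eq_abs, abs_of_pos (by positivity)]
            gcongr
            calc ‖(sdih / sih) • (z x - z y) + (tdih * sih) • (u tih (sih⁻¹ • z x) - u tih (sih⁻¹ • z y))‖
                ≤ ‖(sdih / sih) • (z x - z y)‖ + ‖(tdih * sih) • (u tih (sih⁻¹ • z x) - u tih (sih⁻¹ • z y))‖ :=
                  norm_add_le _ _
              _ ≤ (|sdih| / sih) * B + (tdih * sih) * C := by
                  gcongr ?_ + ?_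
                  · rw [norm_smul, Real.norm_eq_abs, abs_div, abs_of_pos hsih]
                  · rw [norm_smul, Real.norm_eq_abs, abs_of_pos (by positivity)]
  refine key.trans ?_
  have hC' : C ≤ Lu * (sih⁻¹ * B) := hC
  have hsih' : sih⁻¹ > 0 := inv_pos.mpr hsih
  have expand : (si / si1) * (1 + h * (|sdih| / sih + tdih * Lu) * (1 + h / 2 * (|sdi| / si + tdi * Lu))) * A
      = (si / si1) * A + (h / si1) * ((|sdih| / sih + tdih * Lu)
        * ((si * (1 + h / 2 * (|sdi| / si + tdi * Lu))) * A)) := by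
    field_simp
  rw [expand]
  gcongr (si / si1) * A + (h / si1) * ?_
  calc (|sdih| / sih) * B + (tdih * sih) * C
      ≤ (|sdih| / sih) * B + (tdih * sih) * (Lu * (sih⁻¹ * B)) := by gcongr
    _ = (|sdih| / sih + tdih * Lu) * B := by field_simp
    _ ≤ (|sdih| / sih + tdih * Lu) * ((si * (1 + h / 2 * (|sdi| / si + tdi * Lu))) * A) := by
        gcongr
end

section
/- Let (α_t, σ_t) and (ᾱ_r, σ̄_r) be two schedulers, i.e., continuous functions [0,1] → [0,1] with α_0 = 0 = σ_1, α_1 = 1 = σ_0, and snr(t) = α_t/σ_t strictly monotone increasing (with snr(0)=0, snr(1)=∞). Define t_r = snr^{-1}(s̄nr(r)) where s̄nr(r) = ᾱ_r/σ̄_r, and s_r = σ̄_r/σ_{t_r}. Then ᾱ_r = s_r·α_{t_r} and σ̄_r = s_r·σ_{t_r} for all r ∈ (0,1), t_r is strictly increasing with t_0 = 0, t_1 = 1, and s_1 = 1. -/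
open Set

/-! Since `snr ∘ t = s̄nr > 0` on `(0,1)`, `t` maps `(0,1)` into `(0,1)`, and strict monotonicity
of `t` there is inherited from that of `s̄nr` through the strictly increasing `snr`. Clearing
denominators, `α_{t_r} σ̄_r = ᾱ_r σ_{t_r}` holds on `(0,1)` between functions continuous on `[0,1]`,
hence also at the endpoints: at `r = 0` it forces `α_{t_0} = 0`, i.e. `t_0 = 0`, and at `r = 1`
it forces `σ_{t_1} = 0`, i.e. `t_1 = 1`. The same continuity argument applied to
`ᾱ = s · (α ∘ t)` gives `s_1 = s_1 α_1 = ᾱ_1 = 1`. -/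

theorem Set.EqOn.Icc_of_Ioo {X Y : Type*} [LinearOrder X] [TopologicalSpace X] [OrderTopology X]
    [DenselyOrdered X] [TopologicalSpace Y] [T2Space Y] {f g : X → Y} {a b : X} (hab : a ≠ b)
    (h : EqOn f g (Ioo a b)) (hf : ContinuousOn f (Icc a b)) (hg : ContinuousOn g (Icc a b)) :
    EqOn f g (Icc a b) :=
  h.of_subset_closure hf hg Ioo_subset_Icc_self (closure_Ioo hab).ge

theorem StrictMonoOn.of_comp {α β γ : Type*} [Preorder α] [LinearOrder β] [Preorder γ]
    {g : β → γ} {f : α → β} {s : Set α} {t : Set β} (hg : StrictMonoOn g t) (hf : MapsTo f s t)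
    (hgf : StrictMonoOn (g ∘ f) s) : StrictMonoOn f s :=
  fun _ hx _ hy hxy => (hg.lt_iff_lt (hf hx) (hf hy)).mp (hgf hx hy hxy)

theorem StrictMonoOn.Icc_of_Ioo {α β : Type*} [PartialOrder α] [Preorder β] {f : α → β}
    {a b : α} (hf : StrictMonoOn f (Ioo a b)) (hmaps : MapsTo f (Ioo a b) (Ioo (f a) (f b)))
    (hab : f a < f b) : StrictMonoOn f (Icc a b) := by
  intro x hx y hy hxy
  rcases hx.1.eq_or_lt with rfl | hax <;> rcases hy.2.eq_or_lt with rfl | hyb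
  · exact hab
  · exact (hmaps ⟨hxy, hyb⟩).1
  · exact (hmaps ⟨hax, hxy⟩).2
  · exact hf ⟨hax, hxy.trans hyb⟩ ⟨hax.trans hxy, hyb⟩ hxy

section Scheduler

variable {α σ : ℝ → ℝ}

theorem snr_pos_of_mem_Ioo (hα0 : α 0 = 0) (hsnr : StrictMonoOn (fun τ => α τ / σ τ) (Ico 0 1))
    {τ : ℝ} (hτ : τ ∈ Ioo 0 1) : 0 < α τ / σ τ := by
  simpa [hα0] using hsnr (left_mem_Ico.mpr zero_lt_one) (mem_Ico_of_Ioo hτ) hτ.1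

/-- In Lean `α 1 / σ 1 = α 1 / 0 = 0`, so a positive `snr` also rules out `τ = 1`. -/
theorem mem_Ioo_of_snr_pos (hα0 : α 0 = 0) (hσ1 : σ 1 = 0) {τ : ℝ} (hτ : τ ∈ Icc 0 1)
    (h : 0 < α τ / σ τ) : τ ∈ Ioo 0 1 := by
  refine ⟨hτ.1.lt_of_ne ?_, hτ.2.lt_of_ne ?_⟩ <;> rintro rfl <;> simp_all

theorem eq_zero_of_alpha_eq_zero (hα0 : α 0 = 0) (hα1 : α 1 = 1)
    (hsnr : StrictMonoOn (fun τ => α τ / σ τ) (Ico 0 1)) {τ : ℝ} (hτ : τ ∈ Icc 0 1)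
    (h : α τ = 0) : τ = 0 := by
  by_contra hne
  rcases hτ.2.eq_or_lt with rfl | hlt
  · simp_all
  · simpa [h] using snr_pos_of_mem_Ioo hα0 hsnr ⟨hτ.1.lt_of_ne' hne, hlt⟩

theorem eq_one_of_sigma_eq_zero (hσpos : ∀ τ ∈ Ico (0:ℝ) 1, 0 < σ τ) {τ : ℝ}
    (hτ : τ ∈ Icc 0 1) (h : σ τ = 0) : τ = 1 := by
  by_contra hne
  exact (hσpos τ ⟨hτ.1, hτ.2.lt_of_ne hne⟩).ne' h

end Scheduler

theorem scheduler_scale_time_match_general (α σ αb σb t s : ℝ → ℝ)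
    (hαc : ContinuousOn α (Icc 0 1)) (hσc : ContinuousOn σ (Icc 0 1))
    (hαbc : ContinuousOn αb (Icc 0 1)) (hσbc : ContinuousOn σb (Icc 0 1))
    (hα0 : α 0 = 0) (hσ1 : σ 1 = 0) (hα1 : α 1 = 1)
    (hαb0 : αb 0 = 0) (hσb1 : σb 1 = 0) (hαb1 : αb 1 = 1)
    (hσpos : ∀ τ ∈ Ico (0:ℝ) 1, 0 < σ τ)
    (hσbpos : ∀ r ∈ Ico (0:ℝ) 1, 0 < σb r)
    (hsnr : StrictMonoOn (fun τ => α τ / σ τ) (Ico (0:ℝ) 1))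
    (hsnrb : StrictMonoOn (fun r => αb r / σb r) (Ico (0:ℝ) 1))
    (ht_cont : ContinuousOn t (Icc 0 1))
    (ht_mem : MapsTo t (Icc (0:ℝ) 1) (Icc (0:ℝ) 1))
    (ht_def : ∀ r ∈ Ioo (0:ℝ) 1, α (t r) / σ (t r) = αb r / σb r)
    (hs_cont : ContinuousOn s (Icc 0 1))
    (hs_def : ∀ r ∈ Ico (0:ℝ) 1, s r = σb r / σ (t r)) :
    (∀ r ∈ Ioo (0:ℝ) 1, αb r = s r * α (t r) ∧ σb r = s r * σ (t r)) ∧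
      StrictMonoOn t (Icc (0:ℝ) 1) ∧ t 0 = 0 ∧ t 1 = 1 ∧ s 1 = 1 := by
  have h0 : (0:ℝ) ∈ Icc 0 1 := left_mem_Icc.mpr zero_le_one
  have h1 : (1:ℝ) ∈ Icc 0 1 := right_mem_Icc.mpr zero_le_one
  have ht_Ioo : MapsTo t (Ioo 0 1) (Ioo 0 1) := fun r hr =>
    mem_Ioo_of_snr_pos hα0 hσ1 (ht_mem (mem_Icc_of_Ioo hr))
      (ht_def r hr ▸ snr_pos_of_mem_Ioo hαb0 hsnrb hr)
  have hcross : EqOn (fun r => α (t r) * σb r) (fun r => αb r * σ (t r)) (Icc 0 1) := by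
    refine EqOn.Icc_of_Ioo zero_ne_one (fun r hr => ?_) ((hαc.comp ht_cont ht_mem).mul hσbc)
      (hαbc.mul (hσc.comp ht_cont ht_mem))
    exact (div_eq_div_iff (hσpos _ (mem_Ico_of_Ioo (ht_Ioo hr))).ne'
      (hσbpos r (mem_Ico_of_Ioo hr)).ne').mp (ht_def r hr)
  have ht0 : t 0 = 0 := by
    refine eq_zero_of_alpha_eq_zero hα0 hα1 hsnr (ht_mem h0) ?_
    simpa [hαb0, (hσbpos 0 (left_mem_Ico.mpr zero_lt_one)).ne'] using hcross h0
  have ht1 : t 1 = 1 := by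
    refine eq_one_of_sigma_eq_zero hσpos (ht_mem h1) ?_
    simpa [hσb1, hαb1] using (hcross h1).symm
  have hmatch : ∀ r ∈ Ioo (0:ℝ) 1, αb r = s r * α (t r) ∧ σb r = s r * σ (t r) := by
    intro r hr
    have hσt := (hσpos _ (mem_Ico_of_Ioo (ht_Ioo hr))).ne'
    have hcr := hcross (mem_Icc_of_Ioo hr)
    rw [hs_def r (mem_Ico_of_Ioo hr)]
    refine ⟨?_, (div_mul_cancel₀ _ hσt).symm⟩
    field_simp
    linarith
  have hs1 : s 1 = 1 := by
    have h := EqOn.Icc_of_Ioo zero_ne_one (fun r hr => (hmatch r hr).1.symm)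
      (hs_cont.mul (hαc.comp ht_cont ht_mem)) hαbc h1
    simpa [ht1, hα1, hαb1] using h
  have ht_mono : StrictMonoOn t (Ioo 0 1) := by
    refine hsnr.of_comp (fun r hr => mem_Ico_of_Ioo (ht_Ioo hr)) fun x hx y hy hxy => ?_
    simpa only [Function.comp, ht_def x hx, ht_def y hy] using
      hsnrb (mem_Ico_of_Ioo hx) (mem_Ico_of_Ioo hy) hxy
  exact ⟨hmatch, ht_mono.Icc_of_Ioo (by rwa [ht0, ht1]) (by simp [ht0, ht1]), ht0, ht1, hs1⟩

/-- Matching two schedulers `(α, σ)` and `(ᾱ, σ̄)` via signal-to-noise ratios: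
with `t_r = snr⁻¹(s̄nr(r))` (characterized by `snr(t_r) = s̄nr(r)` on `(0,1)`,
`t` continuous with values in `[0,1]`) and `s_r = σ̄_r/σ_{t_r}` on `[0,1)` (extended
continuously to `r = 1`), one has `ᾱ_r = s_r α_{t_r}` and `σ̄_r = s_r σ_{t_r}` on `(0,1)`,
`t` is strictly increasing with `t_0 = 0`, `t_1 = 1`, and `s_1 = 1`. -/
theorem scheduler_scale_time_match (α σ αb σb t s : ℝ → ℝ)
    (hαc : ContinuousOn α (Icc 0 1)) (hσc : ContinuousOn σ (Icc 0 1))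
    (hαbc : ContinuousOn αb (Icc 0 1)) (hσbc : ContinuousOn σb (Icc 0 1))
    (hα0 : α 0 = 0) (hσ1 : σ 1 = 0) (hα1 : α 1 = 1) (hσ0 : σ 0 = 1)
    (hαb0 : αb 0 = 0) (hσb1 : σb 1 = 0) (hαb1 : αb 1 = 1) (hσb0 : σb 0 = 1)
    (hσpos : ∀ τ ∈ Ico (0:ℝ) 1, 0 < σ τ)
    (hσbpos : ∀ r ∈ Ico (0:ℝ) 1, 0 < σb r)
    (hsnr : StrictMonoOn (fun τ => α τ / σ τ) (Ico (0:ℝ) 1))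
    (hsnrb : StrictMonoOn (fun r => αb r / σb r) (Ico (0:ℝ) 1))
    (ht_cont : ContinuousOn t (Icc 0 1))
    (ht_mem : MapsTo t (Icc (0:ℝ) 1) (Icc (0:ℝ) 1))
    (ht_def : ∀ r ∈ Ioo (0:ℝ) 1, α (t r) / σ (t r) = αb r / σb r)
    (hs_cont : ContinuousOn s (Icc 0 1))
    (hs_def : ∀ r ∈ Ico (0:ℝ) 1, s r = σb r / σ (t r)) :
    (∀ r ∈ Ioo (0:ℝ) 1, αb r = s r * α (t r) ∧ σb r = s r * σ (t r)) ∧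
      StrictMonoOn t (Icc (0:ℝ) 1) ∧ t 0 = 0 ∧ t 1 = 1 ∧ s 1 = 1 :=
  scheduler_scale_time_match_general α σ αb σb t s hαc hσc hαbc hσbc hα0 hσ1 hα1 hαb0 hσb1 hαb1
    hσpos hσbpos hsnr hsnrb ht_cont ht_mem ht_def hs_cont hs_def
end

section
/- Fix d ≥ 1, x₁ ∈ ℝ^d, and differentiable functions α, σ : (0,1) → ℝ with σ > 0, and a scale-time transformation (s_r, t_r) with s_r > 0 differentiable and t_r differentiable. Define ᾱ_r = s_r·α_{t_r}, σ̄_r = s_r·σ_{t_r}, and the conditional vector fields u_t(x|x₁) = (σ̇_t/σ_t)·x + (α̇_t − σ̇_t·α_t/σ_t)·x₁ and ū_r(x|x₁) = (σ̄̇_r/σ̄_r)·x + (ᾱ̇_r − σ̄̇_r·ᾱ_r/σ̄_r)·x₁. Then ū_r(x|x₁) = (ṡ_r/s_r)·x + s_r·ṫ_r·u_{t_r}(x/s_r | x₁) for all x ∈ ℝ^d and r ∈ (0,1). -/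
open Set

/-- Conditional vector-field identity: with `ᾱ_r = s_r α_{t_r}`, `σ̄_r = s_r σ_{t_r}`
and the conditional vector fields
`u_t(x|x₁) = (σ̇_t/σ_t)x + (α̇_t − σ̇_t α_t/σ_t)x₁`,
`ū_r(x|x₁) = (σ̄̇_r/σ̄_r)x + (ᾱ̇_r − σ̄̇_r ᾱ_r/σ̄_r)x₁`,
one has `ū_r(x|x₁) = (ṡ_r/s_r)·x + s_r ṫ_r · u_{t_r}(x/s_r | x₁)` on `(0,1)`. -/
theorem conditional_field_scale_time {E : Type*} [NormedAddCommGroup E] [NormedSpace ℝ E]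
    (x₁ : E) (α σ α' σ' s t s' t' : ℝ → ℝ)
    (hα : ∀ τ ∈ Ioo (0:ℝ) 1, HasDerivAt α (α' τ) τ)
    (hσ : ∀ τ ∈ Ioo (0:ℝ) 1, HasDerivAt σ (σ' τ) τ)
    (hσpos : ∀ τ ∈ Ioo (0:ℝ) 1, 0 < σ τ)
    (hs : ∀ r ∈ Ioo (0:ℝ) 1, HasDerivAt s (s' r) r)
    (ht : ∀ r ∈ Ioo (0:ℝ) 1, HasDerivAt t (t' r) r)
    (hspos : ∀ r ∈ Ioo (0:ℝ) 1, 0 < s r)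
    (ht_mem : MapsTo t (Ioo (0:ℝ) 1) (Ioo (0:ℝ) 1)) :
    ∀ r ∈ Ioo (0:ℝ) 1, ∀ x : E,
      (deriv (fun ρ => s ρ * σ (t ρ)) r / (s r * σ (t r))) • x +
          (deriv (fun ρ => s ρ * α (t ρ)) r -
              deriv (fun ρ => s ρ * σ (t ρ)) r * (s r * α (t r)) / (s r * σ (t r))) • x₁ =
        (s' r / s r) • x +
          (s r * t' r) •
            ((σ' (t r) / σ (t r)) • ((s r)⁻¹ • x) +
              (α' (t r) - σ' (t r) * α (t r) / σ (t r)) • x₁) := by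
  intro r hr x
  have hsr := (hspos r hr).ne'
  have hσr := (hσpos (t r) (ht_mem hr)).ne'
  have hdσ : HasDerivAt (fun ρ => s ρ * σ (t ρ))
      (s' r * σ (t r) + s r * (σ' (t r) * t' r)) r :=
    (hs r hr).mul ((hσ (t r) (ht_mem hr)).comp r (ht r hr))
  have hdα : HasDerivAt (fun ρ => s ρ * α (t ρ))
      (s' r * α (t r) + s r * (α' (t r) * t' r)) r :=
    (hs r hr).mul ((hα (t r) (ht_mem hr)).comp r (ht r hr))
  rw [hdσ.deriv, hdα.deriv]
  match_scalars <;> field_simp <;> ring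
end

section
/- Consider the probability path p_t(x) = ∫ N(x | α_t x₁, σ_t² I) q(x₁) dx₁ generated by a scheduler (α_t, σ_t), and a scale-time transformation s_r x with ᾱ_r = s_r α_{t_r}, σ̄_r = s_r σ_{t_r} defining p̄_r(x|x₁) = N(x | ᾱ_r x₁, σ̄_r² I). Then the posterior densities agree under rescaling: p̄_r(x₁ | x) = p_{t_r}(x₁ | x/s_r) for all x ∈ ℝ^d and x₁, where posteriors are taken with respect to the common prior q on x₁. -/
open MeasureTheory Real

/-- The `d`-dimensional isotropic Gaussian density `N(x | μ, c²I)`. -/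
noncomputable def gaussDens (d : ℕ) (μ : EuclideanSpace ℝ (Fin d)) (c : ℝ)
    (x : EuclideanSpace ℝ (Fin d)) : ℝ :=
  (2 * π * c ^ 2) ^ (-(d : ℝ) / 2) * Real.exp (-‖x - μ‖ ^ 2 / (2 * c ^ 2))

lemma gaussDens_scale (d : ℕ) (α σ s : ℝ) (hσ : 0 < σ) (hs : 0 < s)
    (x x₁ : EuclideanSpace ℝ (Fin d)) :
    gaussDens d ((s * α) • x₁) (s * σ) x
      = s ^ (-(d : ℝ)) * gaussDens d (α • x₁) σ (s⁻¹ • x) := by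
  unfold gaussDens
  have hnorm : ‖x - (s * α) • x₁‖ = s * ‖s⁻¹ • x - α • x₁‖ := by
    rw [← norm_smul_of_nonneg hs.le, smul_sub, smul_smul, smul_smul,
      mul_inv_cancel₀ hs.ne', one_smul]
  have hpow : (2 * π * (s * σ) ^ 2) ^ (-(d : ℝ) / 2)
      = s ^ (-(d : ℝ)) * (2 * π * σ ^ 2) ^ (-(d : ℝ) / 2) := by
    have h2 : (0:ℝ) < 2 * π * σ ^ 2 := by positivity
    have : 2 * π * (s * σ) ^ 2 = (s ^ 2) * (2 * π * σ ^ 2) := by ring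
    rw [this, Real.mul_rpow (by positivity) h2.le, ← Real.rpow_natCast s 2,
      ← Real.rpow_mul hs.le]
    ring_nf
  rw [hnorm, hpow, mul_assoc]
  congr 2
  rw [mul_pow, mul_pow]
  field_simp

/-- Posterior equality under rescaling: for the Gaussian paths
`p_t(x|x₁) = N(x | α x₁, σ²I)` and `p̄_r(x|x₁) = N(x | s·α x₁, (s·σ)²I)` with common
prior `q` on `x₁`, the Bayes posteriors agree: `p̄_r(x₁|x) = p_{t_r}(x₁|x/s)`. -/
theorem posterior_rescaling (d : ℕ) (hd : 1 ≤ d)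
    (q : EuclideanSpace ℝ (Fin d) → ℝ)
    (hq0 : ∀ y, 0 ≤ q y) (hqint : Integrable q) (hq1 : ∫ y, q y = 1)
    (α σ s : ℝ) (hσ : 0 < σ) (hs : 0 < s) :
    ∀ x x₁ : EuclideanSpace ℝ (Fin d),
      gaussDens d ((s * α) • x₁) (s * σ) x * q x₁ /
          (∫ y, gaussDens d ((s * α) • y) (s * σ) x * q y) =
        gaussDens d (α • x₁) σ (s⁻¹ • x) * q x₁ /
          (∫ y, gaussDens d (α • y) σ (s⁻¹ • x) * q y) := by
  intro x x₁
  have hc : (0:ℝ) < s ^ (-(d : ℝ)) := Real.rpow_pos_of_pos hs _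
  have hrw : ∀ y, gaussDens d ((s * α) • y) (s * σ) x * q y
      = s ^ (-(d : ℝ)) * (gaussDens d (α • y) σ (s⁻¹ • x) * q y) := by
    intro y; rw [gaussDens_scale d α σ s hσ hs x y]; ring
  simp only [hrw, integral_const_mul]
  rw [mul_div_mul_left _ _ hc.ne']
end

section
/- Let (α_t, σ_t) be a scheduler with strictly increasing snr(t) = α_t/σ_t mapping [0,1] onto [0,∞]. Then: (i) for every other scheduler (ᾱ_r, σ̄_r) there exists a scale-time transformation (s_r, t_r) with s_1 = 1 and t_r a homeomorphism of [0,1] such that ᾱ_r = s_r α_{t_r} and σ̄_r = s_r σ_{t_r}; and (ii) conversely, for every scale-time transformation (s_r, t_r) with s_1 = 1, s_r > 0, and t_r an increasing homeomorphism of [0,1], the pair (ᾱ_r, σ̄_r) = (s_r α_{t_r}, s_r σ_{t_r}) is again a scheduler, i.e., satisfies ᾱ_0 = 0 = σ̄_1, ᾱ_1 = 1 = σ̄_0, and ᾱ_r/σ̄_r is strictly monotone. -/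
open Set

/-- A scheduler: continuous `α, σ : [0,1] → [0,1]` with `α_0 = 0 = σ_1`,
`α_1 = 1 = σ_0`, `σ > 0` on `[0,1)`, and strictly increasing `snr = α/σ` on `[0,1)`. -/
def IsScheduler (α σ : ℝ → ℝ) : Prop :=
  ContinuousOn α (Icc 0 1) ∧ ContinuousOn σ (Icc 0 1) ∧
    (∀ τ ∈ Icc (0:ℝ) 1, α τ ∈ Icc (0:ℝ) 1 ∧ σ τ ∈ Icc (0:ℝ) 1) ∧
    α 0 = 0 ∧ σ 1 = 0 ∧ α 1 = 1 ∧ σ 0 = 1 ∧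
    (∀ τ ∈ Ico (0:ℝ) 1, 0 < σ τ) ∧
    StrictMonoOn (fun τ => α τ / σ τ) (Ico 0 1)

/-- A scale-time transformation: a positive continuous scale `s` with `s_0 = 1` and an
increasing homeomorphic time reparametrization `t` of `[0,1]` with `t_0 = 0, t_1 = 1`. -/
def IsScaleTime (s t : ℝ → ℝ) : Prop :=
  ContinuousOn s (Icc 0 1) ∧ ContinuousOn t (Icc 0 1) ∧
    (∀ r ∈ Icc (0:ℝ) 1, 0 < s r) ∧ s 0 = 1 ∧
    t 0 = 0 ∧ t 1 = 1 ∧ StrictMonoOn t (Icc 0 1) ∧ MapsTo t (Icc 0 1) (Icc 0 1)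

/-- The snr of any scheduler attains every nonnegative value on `[0,1)`. -/
lemma scheduler_snr_surj {a b : ℝ → ℝ} (h : IsScheduler a b) :
    ∀ y : ℝ, 0 ≤ y → ∃ τ ∈ Ico (0:ℝ) 1, a τ / b τ = y := by
  obtain ⟨hac, hbc, hrange, ha0, hb1, ha1, hb0, hbpos, hmono⟩ := h
  intro y hy
  -- find a point `r0 < 1` where the snr exceeds `y`
  have h1mem : (1:ℝ) ∈ Icc (0:ℝ) 1 := by norm_num
  have hta : Filter.Tendsto a (nhdsWithin 1 (Icc 0 1)) (nhds 1) := by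
    have := hac.continuousWithinAt h1mem
    rwa [ContinuousWithinAt, ha1] at this
  have htb : Filter.Tendsto b (nhdsWithin 1 (Icc 0 1)) (nhds 0) := by
    have := hbc.continuousWithinAt h1mem
    rwa [ContinuousWithinAt, hb1] at this
  have hea : ∀ᶠ r in nhdsWithin (1:ℝ) (Icc 0 1), (1:ℝ)/2 < a r :=
    hta.eventually (eventually_gt_nhds (by norm_num))
  have heb : ∀ᶠ r in nhdsWithin (1:ℝ) (Icc 0 1), b r < 1/(2*(y+1)) :=
    htb.eventually (eventually_lt_nhds (by positivity))
  have hle : nhdsWithin (1:ℝ) (Ico 0 1) ≤ nhdsWithin 1 (Icc 0 1) :=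
    nhdsWithin_mono _ Ico_subset_Icc_self
  haveI : Filter.NeBot (nhdsWithin (1:ℝ) (Ico 0 1)) :=
    right_nhdsWithin_Ico_neBot (by norm_num)
  have hev : ∀ᶠ r in nhdsWithin (1:ℝ) (Ico 0 1),
      r ∈ Ico (0:ℝ) 1 ∧ (1:ℝ)/2 < a r ∧ b r < 1/(2*(y+1)) := by
    filter_upwards [self_mem_nhdsWithin, hle hea, hle heb] with r h1 h2 h3
    exact ⟨h1, h2, h3⟩
  obtain ⟨r0, hr0, har0, hbr0⟩ := hev.exists
  have hbr0pos : 0 < b r0 := hbpos r0 hr0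
  have hqr0 : y < a r0 / b r0 := by
    rw [lt_div_iff₀ hbr0pos]
    have hmul : (y+1) * b r0 < (y+1) * (1/(2*(y+1))) :=
      mul_lt_mul_of_pos_left hbr0 (by linarith)
    have h2 : (y+1) * (1/(2*(y+1))) = 1/2 := by
      have : (y:ℝ) + 1 ≠ 0 := by positivity
      field_simp
    nlinarith [hmul, h2, hbr0pos, har0]
  -- IVT on `[0, r0]`
  have hsub : Icc (0:ℝ) r0 ⊆ Ico (0:ℝ) 1 := fun x hx => ⟨hx.1, lt_of_le_of_lt hx.2 hr0.2⟩
  have hsub' : Icc (0:ℝ) r0 ⊆ Icc (0:ℝ) 1 := hsub.trans Ico_subset_Icc_self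
  have hqc : ContinuousOn (fun τ => a τ / b τ) (Icc 0 r0) :=
    (hac.mono hsub').div (hbc.mono hsub')
      (fun x hx => ne_of_gt (hbpos x (hsub hx)))
  have hy' : y ∈ Icc ((fun τ => a τ / b τ) 0) ((fun τ => a τ / b τ) r0) := by
    constructor
    · simpa [ha0, hb0] using hy
    · exact hqr0.le
  obtain ⟨τ, hτ, hτy⟩ := intermediate_value_Icc hr0.1 hqc hy'
  exact ⟨τ, hsub hτ, hτy⟩

/-- Equivalence of Gaussian-path schedulers and scale-time transformations:
(i) any other scheduler `(ᾱ, σ̄)` arises from `(α, σ)` by a scale-time transformation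
with `s_1 = 1`; (ii) conversely, any scale-time transformation with `s_1 = 1` applied to
`(α, σ)` yields again a scheduler (boundary values and strictly monotone snr). -/
theorem scheduler_scale_time_equivalence (α σ : ℝ → ℝ)
    (hsched : IsScheduler α σ)
    (hsurj : ∀ y : ℝ, 0 ≤ y → ∃ τ ∈ Ico (0:ℝ) 1, α τ / σ τ = y) :
    (∀ αb σb : ℝ → ℝ, IsScheduler αb σb →
      ∃ s t : ℝ → ℝ, IsScaleTime s t ∧ s 1 = 1 ∧
        ∀ r ∈ Icc (0:ℝ) 1, αb r = s r * α (t r) ∧ σb r = s r * σ (t r)) ∧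
    (∀ s t : ℝ → ℝ, IsScaleTime s t → s 1 = 1 →
      s 0 * α (t 0) = 0 ∧ s 1 * σ (t 1) = 0 ∧
        s 1 * α (t 1) = 1 ∧ s 0 * σ (t 0) = 1 ∧
        StrictMonoOn (fun r => (s r * α (t r)) / (s r * σ (t r))) (Ico 0 1)) := by
  obtain ⟨hαc, hσc, hrange, hα0, hσ1, hα1, hσ0, hσpos, hmono⟩ := hsched
  constructor
  · -- Part (i)
    intro αb σb hschedb
    have hsnrb := scheduler_snr_surj hschedb
    obtain ⟨hαbc, hσbc, hrangeb, hαb0, hσb1, hαb1, hσb0, hσbpos, hmonob⟩ := hschedb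
    -- choose the time reparametrization
    have key : ∀ r, r ∈ Ico (0:ℝ) 1 → ∃ τ, τ ∈ Ico (0:ℝ) 1 ∧ α τ / σ τ = αb r / σb r := by
      intro r hr
      have h0 : 0 ≤ αb r / σb r :=
        div_nonneg (hrangeb r (Ico_subset_Icc_self hr)).1.1 (hσbpos r hr).le
      obtain ⟨τ, hτ, hτe⟩ := hsurj _ h0
      exact ⟨τ, hτ, hτe⟩
    choose f hfmem hfeq using key
    set t : ℝ → ℝ := fun r => if hr : r ∈ Ico (0:ℝ) 1 then f r hr else 1 with ht_def
    have ht_mem : ∀ r (hr : r ∈ Ico (0:ℝ) 1), t r ∈ Ico (0:ℝ) 1 := by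
      intro r hr; simp only [ht_def, dif_pos hr]; exact hfmem r hr
    have ht_eq : ∀ r (hr : r ∈ Ico (0:ℝ) 1), α (t r) / σ (t r) = αb r / σb r := by
      intro r hr; simp only [ht_def, dif_pos hr]; exact hfeq r hr
    have ht1 : t 1 = 1 := by
      simp only [ht_def]
      rw [dif_neg (by norm_num [mem_Ico] : (1:ℝ) ∉ Ico (0:ℝ) 1)]
    have hinj : InjOn (fun τ => α τ / σ τ) (Ico 0 1) := hmono.injOn
    -- strict monotonicity of t
    have ht_strict : StrictMonoOn t (Icc 0 1) := by
      intro r1 h1 r2 h2 hlt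
      rcases lt_or_eq_of_le h2.2 with hr2 | hr2
      · have hr1 : r1 ∈ Ico (0:ℝ) 1 := ⟨h1.1, lt_trans hlt hr2⟩
        have hr2' : r2 ∈ Ico (0:ℝ) 1 := ⟨h2.1, hr2⟩
        have hq : α (t r1) / σ (t r1) < α (t r2) / σ (t r2) := by
          rw [ht_eq r1 hr1, ht_eq r2 hr2']
          exact hmonob hr1 hr2' hlt
        exact (hmono.lt_iff_lt (ht_mem r1 hr1) (ht_mem r2 hr2')).mp hq
      · have hr1 : r1 ∈ Ico (0:ℝ) 1 := ⟨h1.1, hr2 ▸ hlt⟩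
        have h2' : t r2 = 1 := by rw [hr2]; exact ht1
        rw [h2']
        exact (ht_mem r1 hr1).2
    have ht_maps : MapsTo t (Icc 0 1) (Icc 0 1) := by
      intro r hr
      rcases lt_or_eq_of_le hr.2 with h | h
      · exact Ico_subset_Icc_self (ht_mem r ⟨hr.1, h⟩)
      · rw [h, ht1]; norm_num
    -- surjectivity of t onto [0,1]
    have ht_surj : SurjOn t (Icc 0 1) (Icc 0 1) := by
      intro τ hτ
      rcases lt_or_eq_of_le hτ.2 with hτ1 | hτ1
      · have hτI : τ ∈ Ico (0:ℝ) 1 := ⟨hτ.1, hτ1⟩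
        have hy : 0 ≤ αb τ / σb τ := by
          exact div_nonneg (hrangeb τ hτ).1.1 (hσbpos τ hτI).le
        have hy' : 0 ≤ α τ / σ τ := div_nonneg (hrange τ hτ).1.1 (hσpos τ hτI).le
        obtain ⟨r, hr, hre⟩ := hsnrb _ hy'
        have he : (fun τ => α τ / σ τ) (t r) = (fun τ => α τ / σ τ) τ := by
          simp only
          rw [ht_eq r hr, hre]
        have := hinj (ht_mem r hr) hτI he
        exact ⟨r, Ico_subset_Icc_self hr, this⟩
      · refine ⟨1, by norm_num, ?_⟩
        rw [ht1, hτ1]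
    -- continuity of t
    have htc : ContinuousOn t (Icc 0 1) := by
      rw [continuousOn_iff_continuous_restrict]
      have hT : ∀ x : Icc (0:ℝ) 1, t x ∈ Icc (0:ℝ) 1 := fun x => ht_maps x.2
      let T : Icc (0:ℝ) 1 → Icc (0:ℝ) 1 := fun x => ⟨t x, hT x⟩
      have hTm : Monotone T := by
        intro x y hxy
        show (t x : ℝ) ≤ t y
        exact ht_strict.monotoneOn x.2 y.2 hxy
      have hTs : Function.Surjective T := by
        rintro ⟨z, hz⟩
        obtain ⟨r, hr, hrt⟩ := ht_surj hz
        exact ⟨⟨r, hr⟩, Subtype.ext hrt⟩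
      exact continuous_subtype_val.comp (hTm.continuous_of_surjective hTs)
    -- t 0 = 0
    have h0Ico : (0:ℝ) ∈ Ico (0:ℝ) 1 := by norm_num
    have ht0 : t 0 = 0 := by
      apply hinj (ht_mem 0 h0Ico) h0Ico
      simp only
      rw [ht_eq 0 h0Ico, hα0, hσ0, hαb0, hσb0]
    -- the scale
    set s : ℝ → ℝ := fun r => (αb r + σb r) / (α (t r) + σ (t r)) with hs_def
    have hden : ∀ τ ∈ Icc (0:ℝ) 1, 0 < α τ + σ τ := by
      intro τ hτ
      rcases lt_or_eq_of_le hτ.2 with h | h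
      · have h1 := hσpos τ ⟨hτ.1, h⟩
        have h2 := (hrange τ hτ).1.1
        linarith
      · rw [h, hα1, hσ1]; norm_num
    have hnum : ∀ r ∈ Icc (0:ℝ) 1, 0 < αb r + σb r := by
      intro r hr
      rcases lt_or_eq_of_le hr.2 with h | h
      · have h1 := hσbpos r ⟨hr.1, h⟩
        have h2 := (hrangeb r hr).1.1
        linarith
      · rw [h, hαb1, hσb1]; norm_num
    have hdent : ∀ r ∈ Icc (0:ℝ) 1, 0 < α (t r) + σ (t r) := fun r hr => hden _ (ht_maps hr)
    have hsc : ContinuousOn s (Icc 0 1) := by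
      apply ContinuousOn.div (hαbc.add hσbc)
        ((hαc.comp htc ht_maps).add (hσc.comp htc ht_maps))
      exact fun r hr => ne_of_gt (hdent r hr)
    have hspos : ∀ r ∈ Icc (0:ℝ) 1, 0 < s r := fun r hr =>
      div_pos (hnum r hr) (hdent r hr)
    have hs0 : s 0 = 1 := by
      simp only [hs_def]
      rw [ht0, hαb0, hσb0, hα0, hσ0]
      norm_num
    have hs1 : s 1 = 1 := by
      simp only [hs_def]
      rw [ht1, hαb1, hσb1, hα1, hσ1]
      norm_num
    refine ⟨s, t, ⟨hsc, htc, hspos, hs0, ht0, ht1, ht_strict, ht_maps⟩, hs1, ?_⟩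
    intro r hr
    rcases lt_or_eq_of_le hr.2 with h | h
    · have hrI : r ∈ Ico (0:ℝ) 1 := ⟨hr.1, h⟩
      have hτ := ht_mem r hrI
      have hσt : 0 < σ (t r) := hσpos _ hτ
      have hσbr : 0 < σb r := hσbpos r hrI
      have hcross : α (t r) * σb r = αb r * σ (t r) :=
        (div_eq_div_iff (ne_of_gt hσt) (ne_of_gt hσbr)).mp (ht_eq r hrI)
      have hdpos := hdent r hr
      constructor
      · simp only [hs_def]
        rw [div_mul_eq_mul_div, eq_div_iff (ne_of_gt hdpos)]
        linear_combination -hcross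
      · simp only [hs_def]
        rw [div_mul_eq_mul_div, eq_div_iff (ne_of_gt hdpos)]
        linear_combination hcross
    · rw [h, ht1, hs1, hα1, hσ1, hαb1, hσb1]
      norm_num
  · -- Part (ii)
    intro s t hst hs1
    obtain ⟨hsc, htc, hspos, hs0, ht0, ht1, htmono, htmaps⟩ := hst
    have h0I : (0:ℝ) ∈ Icc (0:ℝ) 1 := by norm_num
    have h1I : (1:ℝ) ∈ Icc (0:ℝ) 1 := by norm_num
    refine ⟨by rw [ht0, hα0, mul_zero], by rw [ht1, hσ1, mul_zero],
      by rw [ht1, hα1, hs1, mul_one], by rw [ht0, hσ0, hs0, mul_one], ?_⟩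
    have htm : ∀ r ∈ Ico (0:ℝ) 1, t r ∈ Ico (0:ℝ) 1 := by
      intro r hr
      have hrI : r ∈ Icc (0:ℝ) 1 := Ico_subset_Icc_self hr
      constructor
      · rw [← ht0]
        rcases eq_or_lt_of_le hr.1 with h | h
        · rw [← h]
        · exact (htmono h0I hrI h).le
      · rw [← ht1]
        exact htmono hrI h1I hr.2
    intro r1 h1 r2 h2 hlt
    have e1 : ∀ r ∈ Ico (0:ℝ) 1, (s r * α (t r)) / (s r * σ (t r)) = α (t r) / σ (t r) := by
      intro r hr
      exact mul_div_mul_left _ _ (ne_of_gt (hspos r (Ico_subset_Icc_self hr)))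
    simp only
    rw [e1 r1 h1, e1 r2 h2]
    exact hmono (htm r1 h1) (htm r2 h2)
      (htmono (Ico_subset_Icc_self h1) (Ico_subset_Icc_self h2) hlt)
end

section
/- Let u_t(x) = E_{p_t(x₁|x)}[u_t(x|x₁)] be the marginal velocity field of a Gaussian probability path with scheduler (α_t, σ_t) and data distribution q, and suppose every scheduler's marginal velocity field and the corresponding flow are well-defined with unique solutions. Then for any two schedulers (α_t, σ_t) and (ᾱ_r, σ̄_r), the flows started from the same noise point x₀ ∼ N(0, I) satisfy x̄(1) = x(1): i.e., the induced coupling between noise x₀ and data endpoint is the same for all schedulers. -/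
/-!
The marginal velocity field of a scheduler is
`u(x) = (σ'/σ) x + (α' - σ' α / σ) m(α / σ, σ⁻¹ x)`, where `m(s, w)` is the posterior mean of `x₁`
given `w = s x₁ + ε`: it sees the scheduler only through the signal-to-noise ratio `s = α / σ`.
So `W(s) = σ(t)⁻¹ x(t)`, taken at the time `t` with `α(t) / σ(t) = s`, solves the
scheduler-free equation `W' = m(s, W)` on `(0, ∞)`, with `W(0) = x₀` and `s⁻¹ W(s) → x(1)`.
Conversely `r ↦ σ̄(r) W(ᾱ(r) / σ̄(r))` solves the flow of `(ᾱ, σ̄)` from `x₀` and tends to `x(1)`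
as `r → 1`, so by uniqueness it is `x̄`. The time change `t` is merely continuous (the SNR may
have vanishing derivative), which is why the chain rule for `W` is proved by a mean value
estimate along `α / σ`.
-/

open MeasureTheory Real Set

/-- Conditional velocity field `u(x|x₁) = (ḃ/b)x + (ȧ − ḃ a/b)x₁`. -/
noncomputable def condVF (d : ℕ) (a a' b b' : ℝ)
    (x x₁ : EuclideanSpace ℝ (Fin d)) : EuclideanSpace ℝ (Fin d) :=
  (b' / b) • x + (a' - b' * a / b) • x₁

/-- Marginal velocity field `u(x) = E_{p(x₁|x)}[u(x|x₁)]` of a Gaussian path. -/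
noncomputable def margVF (d : ℕ) (q : EuclideanSpace ℝ (Fin d) → ℝ)
    (a a' b b' : ℝ) (x : EuclideanSpace ℝ (Fin d)) : EuclideanSpace ℝ (Fin d) :=
  (∫ x₁, gaussDens d (a • x₁) b x * q x₁)⁻¹ •
    ∫ x₁, (gaussDens d (a • x₁) b x * q x₁) • condVF d a a' b b' x x₁

open Filter Topology

section GaussianPath

variable {d : ℕ} {q : EuclideanSpace ℝ (Fin d) → ℝ}

lemma gaussDens_pos {c : ℝ} (hc : c ≠ 0) (μ x : EuclideanSpace ℝ (Fin d)) :
    0 < gaussDens d μ c x :=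
  mul_pos (Real.rpow_pos_of_pos (by positivity) _) (exp_pos _)

lemma gaussDens_nonneg (μ : EuclideanSpace ℝ (Fin d)) (c : ℝ)
    (x : EuclideanSpace ℝ (Fin d)) : 0 ≤ gaussDens d μ c x :=
  mul_nonneg (Real.rpow_nonneg (by positivity) _) (exp_pos _).le

lemma exp_neg_sq_div_le_one (m : ℝ) {c : ℝ} (hc : 0 ≤ c) : exp (-m ^ 2 / c) ≤ 1 :=
  exp_le_one_iff.2 (div_nonpos_of_nonpos_of_nonneg (neg_nonpos.2 (sq_nonneg m)) hc)

lemma gaussDens_le (μ : EuclideanSpace ℝ (Fin d)) (c : ℝ)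
    (x : EuclideanSpace ℝ (Fin d)) :
    gaussDens d μ c x ≤ (2 * π * c ^ 2) ^ (-(d : ℝ) / 2) :=
  mul_le_of_le_one_right (Real.rpow_nonneg (by positivity) _)
    (exp_neg_sq_div_le_one _ (by positivity))

lemma mul_exp_neg_sq_div_le (m : ℝ) {c : ℝ} (hc : 0 < c) : m * exp (-m ^ 2 / c) ≤ 1 + c := by
  have hexp := exp_neg_sq_div_le_one m hc.le
  have hpeak : m ^ 2 / c * exp (-(m ^ 2 / c)) ≤ 1 :=
    (mul_exp_neg_le_exp_neg_one _).trans (exp_le_one_iff.2 (by norm_num))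
  calc m * exp (-m ^ 2 / c) ≤ (1 + m ^ 2) * exp (-m ^ 2 / c) :=
        mul_le_mul_of_nonneg_right (by nlinarith [sq_nonneg (m - 1)]) (exp_pos _).le
    _ = exp (-m ^ 2 / c) + c * (m ^ 2 / c * exp (-(m ^ 2 / c))) := by
        rw [neg_div]; field_simp
    _ ≤ 1 + c * 1 := by gcongr
    _ = 1 + c := by ring

lemma gaussDens_smul_smul {s : ℝ} (hs : 0 < s) (b : ℝ) (μ x : EuclideanSpace ℝ (Fin d)) :
    gaussDens d (s • μ) (s * b) (s • x) = s ^ (-(d:ℝ)) * gaussDens d μ b x := by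
  have hnorm : ‖s • x - s • μ‖ ^ 2 = s ^ 2 * ‖x - μ‖ ^ 2 := by
    rw [← smul_sub, norm_smul, Real.norm_of_nonneg hs.le, mul_pow]
  have hvar : (2 : ℝ) * π * (s * b) ^ 2 = s ^ 2 * (2 * π * b ^ 2) := by ring
  have hpow : (s ^ 2) ^ (-(d : ℝ) / 2) = s ^ (-(d:ℝ)) := by
    rw [← Real.rpow_natCast s 2, ← Real.rpow_mul hs.le]
    congr 1
    ring
  have hexp : -(s ^ 2 * ‖x - μ‖ ^ 2) / (2 * (s * b) ^ 2) = -‖x - μ‖ ^ 2 / (2 * b ^ 2) := by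
    rcases eq_or_ne b 0 with hb | hb
    · simp [hb]
    · field_simp
  rw [gaussDens, gaussDens, hnorm, hvar, Real.mul_rpow (by positivity) (by positivity), hpow, hexp]
  ring


lemma gaussDens_mul_norm_le {a b : ℝ} (ha : 0 < a) (hb : b ≠ 0)
    (x x₁ : EuclideanSpace ℝ (Fin d)) :
    gaussDens d (a • x₁) b x * ‖x₁‖ ≤
      (2 * π * b ^ 2) ^ (-(d : ℝ) / 2) * ((1 + 2 * b ^ 2 + ‖x‖) / a) := by
  set m := ‖x - a • x₁‖
  set e := exp (-m ^ 2 / (2 * b ^ 2))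
  have hx₁ : ‖x₁‖ ≤ (m + ‖x‖) / a := by
    rw [le_div_iff₀ ha]
    have := norm_le_norm_add_norm_sub x (a • x₁)
    rw [norm_smul, Real.norm_of_nonneg ha.le] at this
    linarith
  have he : e ≤ 1 := exp_neg_sq_div_le_one m (by positivity)
  have hme : m * e ≤ 1 + 2 * b ^ 2 := mul_exp_neg_sq_div_le m (by positivity)
  calc gaussDens d (a • x₁) b x * ‖x₁‖
      = (2 * π * b ^ 2) ^ (-(d : ℝ) / 2) * (e * ‖x₁‖) := by rw [gaussDens, mul_assoc]
    _ ≤ (2 * π * b ^ 2) ^ (-(d : ℝ) / 2) * ((m * e + ‖x‖ * e) / a) := by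
        gcongr
        calc e * ‖x₁‖ ≤ e * ((m + ‖x‖) / a) := by gcongr
          _ = (m * e + ‖x‖ * e) / a := by ring
    _ ≤ (2 * π * b ^ 2) ^ (-(d : ℝ) / 2) * ((1 + 2 * b ^ 2 + ‖x‖) / a) := by
        gcongr
        nlinarith [norm_nonneg x]

noncomputable def posteriorMean (d : ℕ) (q : EuclideanSpace ℝ (Fin d) → ℝ) (a b : ℝ)
    (x : EuclideanSpace ℝ (Fin d)) : EuclideanSpace ℝ (Fin d) :=
  (∫ x₁, gaussDens d (a • x₁) b x * q x₁)⁻¹ •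
    ∫ x₁, (gaussDens d (a • x₁) b x * q x₁) • x₁

lemma continuous_gaussDens_smul (a b : ℝ) (x : EuclideanSpace ℝ (Fin d)) :
    Continuous fun x₁ : EuclideanSpace ℝ (Fin d) => gaussDens d (a • x₁) b x := by
  unfold gaussDens
  fun_prop

lemma integrable_gaussDens_mul (hqint : Integrable q) (a b : ℝ) (x : EuclideanSpace ℝ (Fin d)) :
    Integrable fun x₁ => gaussDens d (a • x₁) b x * q x₁ :=
  hqint.bdd_mul (continuous_gaussDens_smul a b x).aestronglyMeasurable
    (Eventually.of_forall fun x₁ => by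
      rw [Real.norm_of_nonneg (gaussDens_nonneg _ _ _)]
      exact gaussDens_le _ _ _)

lemma integrable_gaussDens_mul_smul (hq0 : ∀ y, 0 ≤ q y) (hqint : Integrable q)
    {a b : ℝ} (ha : 0 < a) (hb : b ≠ 0) (x : EuclideanSpace ℝ (Fin d)) :
    Integrable fun x₁ => (gaussDens d (a • x₁) b x * q x₁) • x₁ := by
  refine (hqint.const_mul ((2 * π * b ^ 2) ^ (-(d : ℝ) / 2) * ((1 + 2 * b ^ 2 + ‖x‖) / a))).mono
    ((integrable_gaussDens_mul hqint a b x).aestronglyMeasurable.smul aestronglyMeasurable_id)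
    (Eventually.of_forall fun x₁ => ?_)
  rw [norm_smul, Real.norm_of_nonneg (mul_nonneg (gaussDens_nonneg _ _ _) (hq0 x₁)), norm_mul,
    Real.norm_of_nonneg (hq0 x₁), mul_right_comm]
  exact mul_le_mul_of_nonneg_right ((gaussDens_mul_norm_le ha hb x x₁).trans (le_norm_self _))
    (hq0 x₁)

lemma integral_gaussDens_mul_pos (hq0 : ∀ y, 0 ≤ q y) (hqint : Integrable q) (hq : ¬ q =ᵐ[volume] 0)
    (a : ℝ) {b : ℝ} (hb : b ≠ 0) (x : EuclideanSpace ℝ (Fin d)) :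
    0 < ∫ x₁, gaussDens d (a • x₁) b x * q x₁ := by
  rw [integral_pos_iff_support_of_nonneg (fun x₁ => mul_nonneg (gaussDens_nonneg _ _ _) (hq0 x₁))
    (integrable_gaussDens_mul hqint a b x)]
  have hsupp :
      (Function.support fun x₁ => gaussDens d (a • x₁) b x * q x₁) = Function.support q := by
    ext x₁
    simp [(gaussDens_pos hb _ _).ne']
  rw [hsupp, pos_iff_ne_zero]
  exact (Measure.measure_support_eq_zero_iff _).not.2 hq

lemma margVF_eq_smul_add_smul_posteriorMean (hq0 : ∀ y, 0 ≤ q y) (hqint : Integrable q)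
    (hq : ¬ q =ᵐ[volume] 0) {a b : ℝ} (ha : 0 < a) (hb : b ≠ 0) (a' b' : ℝ)
    (x : EuclideanSpace ℝ (Fin d)) :
    margVF d q a a' b b' x = (b' / b) • x + (a' - b' * a / b) • posteriorMean d q a b x := by
  have hsplit : ∫ x₁, (gaussDens d (a • x₁) b x * q x₁) • condVF d a a' b b' x x₁ =
      (∫ x₁, gaussDens d (a • x₁) b x * q x₁) • ((b' / b) • x) +
        (a' - b' * a / b) • ∫ x₁, (gaussDens d (a • x₁) b x * q x₁) • x₁ := by
    simp only [condVF, smul_add, smul_comm _ (a' - b' * a / b)]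
    rw [integral_add, integral_smul_const, integral_smul]
    exacts [(integrable_gaussDens_mul hqint a b x).smul_const _,
      (integrable_gaussDens_mul_smul hq0 hqint ha hb x).smul (a' - b' * a / b)]
  rw [margVF, posteriorMean, hsplit, smul_add, smul_smul,
    inv_mul_cancel₀ (integral_gaussDens_mul_pos hq0 hqint hq a hb x).ne', one_smul, smul_comm]

lemma margVF_of_ae_eq_zero (hq : q =ᵐ[volume] 0) (a a' b b' : ℝ)
    (x : EuclideanSpace ℝ (Fin d)) : margVF d q a a' b b' x = 0 := by
  have hweight : (fun x₁ => gaussDens d (a • x₁) b x * q x₁) =ᵐ[volume] 0 := by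
    filter_upwards [hq] with x₁ hx₁
    simp [hx₁]
  simp [margVF, integral_congr_ae hweight]

lemma posteriorMean_smul {s : ℝ} (hs : 0 < s) (a b : ℝ) (x : EuclideanSpace ℝ (Fin d)) :
    posteriorMean d q (s * a) (s * b) (s • x) = posteriorMean d q a b x := by
  have hweight : ∀ x₁ : EuclideanSpace ℝ (Fin d),
      gaussDens d ((s * a) • x₁) (s * b) (s • x) * q x₁ =
        s ^ (-(d:ℝ)) * (gaussDens d (a • x₁) b x * q x₁) := fun x₁ => by
    rw [mul_smul, gaussDens_smul_smul hs, mul_assoc]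
  simp only [posteriorMean, hweight]
  simp only [mul_smul, integral_const_mul, integral_smul]
  rw [smul_smul, mul_inv_rev, inv_mul_cancel_right₀ (by positivity)]

lemma posteriorMean_eq_snr {b : ℝ} (hb : 0 < b) (a : ℝ) (x : EuclideanSpace ℝ (Fin d)) :
    posteriorMean d q a b x = posteriorMean d q (a / b) 1 (b⁻¹ • x) := by
  simpa [mul_div_cancel₀ _ hb.ne', smul_inv_smul₀ hb.ne'] using
    posteriorMean_smul (q := q) hb (a / b) 1 (b⁻¹ • x)

lemma continuousAt_posteriorMean (hq0 : ∀ y, 0 ≤ q y) (hqint : Integrable q)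
    (hq : ¬ q =ᵐ[volume] 0) {u₀ : ℝ} (hu₀ : 0 < u₀) (w₀ : EuclideanSpace ℝ (Fin d)) :
    ContinuousAt (fun p : ℝ × EuclideanSpace ℝ (Fin d) => posteriorMean d q p.1 1 p.2)
      (u₀, w₀) := by
  have hcont : ∀ x₁ : EuclideanSpace ℝ (Fin d),
      Continuous fun p : ℝ × EuclideanSpace ℝ (Fin d) => gaussDens d (p.1 • x₁) 1 p.2 * q x₁ := by
    intro x₁
    unfold gaussDens
    fun_prop
  have hmeas : ∀ p : ℝ × EuclideanSpace ℝ (Fin d),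
      AEStronglyMeasurable (fun x₁ => gaussDens d (p.1 • x₁) 1 p.2 * q x₁) volume := fun p =>
    (integrable_gaussDens_mul hqint p.1 1 p.2).aestronglyMeasurable
  have hnear : ∀ᶠ p : ℝ × EuclideanSpace ℝ (Fin d) in 𝓝 (u₀, w₀),
      u₀ / 2 < p.1 ∧ ‖p.2‖ < ‖w₀‖ + 1 :=
    (continuousAt_const.eventually_lt continuousAt_fst (half_lt_self hu₀)).and
      (continuousAt_snd.norm.eventually_lt continuousAt_const (lt_add_one ‖w₀‖))
  have hden : ContinuousAt (fun p : ℝ × EuclideanSpace ℝ (Fin d) =>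
      ∫ x₁, gaussDens d (p.1 • x₁) 1 p.2 * q x₁) (u₀, w₀) := by
    refine continuousAt_of_dominated (bound := fun x₁ => (2 * π * 1 ^ 2) ^ (-(d:ℝ) / 2) * q x₁)
      (.of_forall hmeas) (.of_forall fun p => .of_forall fun x₁ => ?_) (hqint.const_mul _)
      (.of_forall fun x₁ => (hcont x₁).continuousAt)
    rw [Real.norm_of_nonneg (mul_nonneg (gaussDens_nonneg _ _ _) (hq0 x₁))]
    exact mul_le_mul_of_nonneg_right (gaussDens_le _ _ _) (hq0 x₁)
  have hnum : ContinuousAt (fun p : ℝ × EuclideanSpace ℝ (Fin d) =>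
      ∫ x₁, (gaussDens d (p.1 • x₁) 1 p.2 * q x₁) • x₁) (u₀, w₀) := by
    refine continuousAt_of_dominated (bound := fun x₁ =>
        (2 * π * 1 ^ 2) ^ (-(d:ℝ) / 2) * ((1 + 2 * 1 ^ 2 + (‖w₀‖ + 1)) / (u₀ / 2)) * q x₁)
      (.of_forall fun p => (hmeas p).smul aestronglyMeasurable_id) ?_ (hqint.const_mul _)
      (.of_forall fun x₁ => ((hcont x₁).smul continuous_const).continuousAt)
    filter_upwards [hnear] with p ⟨hp₁, hp₂⟩
    refine .of_forall fun x₁ => ?_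
    rw [norm_smul, Real.norm_of_nonneg (mul_nonneg (gaussDens_nonneg _ _ _) (hq0 x₁)),
      mul_right_comm]
    refine mul_le_mul_of_nonneg_right ((gaussDens_mul_norm_le ((half_pos hu₀).trans hp₁)
      one_ne_zero p.2 x₁).trans ?_) (hq0 x₁)
    gcongr
  exact (hden.inv₀ (integral_gaussDens_mul_pos hq0 hqint hq u₀ one_ne_zero w₀).ne').smul hnum

end GaussianPath

section Calculus

variable {E : Type*} [NormedAddCommGroup E] [NormedSpace ℝ E]

lemma HasDerivAt.nonneg_of_monotoneOn_of_mem_nhds {f : ℝ → ℝ} {f' x : ℝ} {s : Set ℝ}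
    (hs : s ∈ 𝓝 x) (hd : HasDerivAt f f' x) (hmono : MonotoneOn f s) : 0 ≤ f' :=
  hd.hasDerivWithinAt.nonneg_of_monotoneOn
    (by simpa using (PerfectSpace.univ_preperfect x (mem_univ x)).nhds_inter hs) hmono

lemma norm_sub_le_sub_of_norm_hasDerivAt_le {f f' : ℝ → E} {B B' : ℝ → ℝ} {a b : ℝ}
    (hab : a ≤ b) (hf : ∀ τ ∈ Icc a b, HasDerivAt f (f' τ) τ)
    (hB : ∀ τ ∈ Icc a b, HasDerivAt B (B' τ) τ) (bound : ∀ τ ∈ Icc a b, ‖f' τ‖ ≤ B' τ) :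
    ‖f b - f a‖ ≤ B b - B a := by
  have hf' : ∀ τ ∈ Icc a b, HasDerivAt (fun τ => f τ - f a) (f' τ) τ := fun τ hτ =>
    (hf τ hτ).sub_const _
  have hB' : ∀ τ ∈ Icc a b, HasDerivAt (fun τ => B τ - B a) (B' τ) τ := fun τ hτ =>
    (hB τ hτ).sub_const _
  refine image_norm_le_of_norm_deriv_right_le_deriv_boundary'
    (fun τ hτ => (hf' τ hτ).continuousAt.continuousWithinAt)
    (fun τ hτ => (hf' τ (Ico_subset_Icc_self hτ)).hasDerivWithinAt) (by simp)
    (fun τ hτ => (hB' τ hτ).continuousAt.continuousWithinAt)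
    (fun τ hτ => (hB' τ (Ico_subset_Icc_self hτ)).hasDerivWithinAt)
    (fun τ hτ => bound τ (Ico_subset_Icc_self hτ)) (right_mem_Icc.2 hab)

lemma eventually_norm_sub_sub_smul_le {ρ ρ' : ℝ → ℝ} {w g : ℝ → E} {s : Set ℝ} {τ₀ : ℝ}
    (hs : s ∈ 𝓝 τ₀) (hρ : ∀ τ ∈ s, HasDerivAt ρ (ρ' τ) τ) (hρ' : ∀ τ ∈ s, 0 ≤ ρ' τ)
    (hw : ∀ τ ∈ s, HasDerivAt w (ρ' τ • g τ) τ) (hg : ContinuousAt g τ₀) {ε : ℝ} (hε : 0 < ε) :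
    ∀ᶠ τ in 𝓝 τ₀, ‖w τ - w τ₀ - (ρ τ - ρ τ₀) • g τ₀‖ ≤ ε * |ρ τ - ρ τ₀| := by
  obtain ⟨l, r, hτ₀, hlr⟩ := mem_nhds_iff_exists_Ioo_subset.1
    (inter_mem hs (hg.eventually (Metric.closedBall_mem_nhds (g τ₀) hε)))
  have hincr : ∀ a b, a ≤ b → Icc a b ⊆ Ioo l r →
      ‖(w b - ρ b • g τ₀) - (w a - ρ a • g τ₀)‖ ≤ ε * ρ b - ε * ρ a := by
    intro a b hab hsub
    refine norm_sub_le_sub_of_norm_hasDerivAt_le hab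
      (fun τ hτ => (hw τ (hlr (hsub hτ)).1).sub ((hρ τ (hlr (hsub hτ)).1).smul_const (g τ₀)))
      (fun τ hτ => (hρ τ (hlr (hsub hτ)).1).const_mul ε) (fun τ hτ => ?_)
    obtain ⟨hτs, hτg⟩ := hlr (hsub hτ)
    rw [← smul_sub, norm_smul, Real.norm_of_nonneg (hρ' τ hτs), mul_comm]
    exact mul_le_mul_of_nonneg_right (by simpa [dist_eq_norm] using hτg) (hρ' τ hτs)
  filter_upwards [Ioo_mem_nhds hτ₀.1 hτ₀.2] with τ hτ
  have hrw : w τ - w τ₀ - (ρ τ - ρ τ₀) • g τ₀ = (w τ - ρ τ • g τ₀) - (w τ₀ - ρ τ₀ • g τ₀) := by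
    rw [sub_smul]; abel
  rw [hrw]
  rcases le_total τ₀ τ with h | h
  · have := hincr τ₀ τ h (Icc_subset_Ioo hτ₀.1 hτ.2)
    rw [← mul_sub] at this
    exact this.trans (mul_le_mul_of_nonneg_left (le_abs_self _) hε.le)
  · have := hincr τ τ₀ h (Icc_subset_Ioo hτ.1 hτ₀.2)
    rw [← mul_sub, norm_sub_rev] at this
    rw [abs_sub_comm]
    exact this.trans (mul_le_mul_of_nonneg_left (le_abs_self _) hε.le)

/-- A chain rule through a right inverse `T` of `ρ` that need not be differentiable. -/
lemma hasDerivAt_comp_of_rightInverse {ρ ρ' T : ℝ → ℝ} {w g : ℝ → E} {s : Set ℝ} {u₀ : ℝ}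
    (hs : s ∈ 𝓝 (T u₀)) (hρ : ∀ τ ∈ s, HasDerivAt ρ (ρ' τ) τ) (hρ' : ∀ τ ∈ s, 0 ≤ ρ' τ)
    (hw : ∀ τ ∈ s, HasDerivAt w (ρ' τ • g τ) τ) (hg : ContinuousAt g (T u₀))
    (hT : ContinuousAt T u₀) (hρT : ∀ᶠ u in 𝓝 u₀, ρ (T u) = u) :
    HasDerivAt (w ∘ T) (g (T u₀)) u₀ := by
  rw [hasDerivAt_iff_isLittleO, Asymptotics.isLittleO_iff]
  intro ε hε
  filter_upwards [hT.eventually (eventually_norm_sub_sub_smul_le hs hρ hρ' hw hg hε), hρT]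
    with u hu hρu
  rwa [hρu, hρT.self_of_nhds, ← Real.norm_eq_abs] at hu

end Calculus

section RightInverse

lemma StrictMonoOn.strictMonoOn_of_leftInvOn {α β : Type*} [LinearOrder α] [Preorder β]
    {ρ : α → β} {T : β → α} {s : Set α} {t : Set β} (hρ : StrictMonoOn ρ s)
    (hT : MapsTo T t s) (hinv : LeftInvOn ρ T t) : StrictMonoOn T t := by
  intro u hu v hv huv
  by_contra! h
  have := hρ.monotoneOn (hT hv) (hT hu) h
  rw [hinv hu, hinv hv] at this
  exact huv.not_ge this

lemma StrictMonoOn.continuousOn_Ici_of_surjOn {T : ℝ → ℝ} {a c e : ℝ}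
    (hmono : StrictMonoOn T (Ici a)) (hmaps : MapsTo T (Ici a) (Ico c e))
    (hsurj : SurjOn T (Ici a) (Ico c e)) (ha : T a = c) : ContinuousOn T (Ici a) := by
  intro u hu
  rcases (mem_Ici.1 hu).eq_or_lt with rfl | hlt
  · have hce : c < e := ha ▸ (hmaps hu).2
    exact hmono.continuousWithinAt_right_of_image_mem_nhdsWithin self_mem_nhdsWithin
      (mem_of_superset (by rw [ha]; exact Ico_mem_nhdsGE hce) hsurj)
  · have hTu : T u ∈ Ioo c e := ⟨ha ▸ hmono self_mem_Ici hu hlt, (hmaps hu).2⟩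
    exact (hmono.continuousAt_of_image_mem_nhds (Ici_mem_nhds hlt) (mem_of_superset
      (Ioo_mem_nhds hTu.1 hTu.2) (Ioo_subset_Ico_self.trans hsurj))).continuousWithinAt

lemma MonotoneOn.tendsto_atTop_of_surjOn {T : ℝ → ℝ} {a c e : ℝ}
    (hmono : MonotoneOn T (Ici a)) (hmaps : MapsTo T (Ici a) (Ico c e))
    (hsurj : SurjOn T (Ici a) (Ico c e)) : Tendsto T atTop (𝓝[Ico c e] e) := by
  have hmem : ∀ᶠ u in atTop, T u ∈ Ico c e := (eventually_ge_atTop a).mono fun u hu => hmaps hu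
  refine tendsto_nhdsWithin_iff.2 ⟨tendsto_order.2 ⟨fun b hb => ?_, fun b hb => ?_⟩, hmem⟩
  · have hce : c < e := (hmaps (self_mem_Ici (a := a))).1.trans_lt (hmaps self_mem_Ici).2
    obtain ⟨v, hv, hTv⟩ := hsurj (show max c ((b + e) / 2) ∈ Ico c e from
      ⟨le_max_left _ _, max_lt hce (by linarith)⟩)
    filter_upwards [eventually_ge_atTop v] with u hu
    calc b < (b + e) / 2 := by linarith
      _ ≤ T v := hTv ▸ le_max_right _ _
      _ ≤ T u := hmono hv (mem_Ici.2 ((mem_Ici.1 hv).trans hu)) hu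
  · exact hmem.mono fun u hu => hu.2.trans hb

end RightInverse

structure IsScheduler_s19 (α σ α' σ' : ℝ → ℝ) : Prop where
  continuousOn_α : ContinuousOn α (Icc 0 1)
  continuousOn_σ : ContinuousOn σ (Icc 0 1)
  α_zero : α 0 = 0
  α_one : α 1 = 1
  σ_zero : σ 0 = 1
  σ_pos : ∀ τ ∈ Ico (0:ℝ) 1, 0 < σ τ
  strictMonoOn_snr : StrictMonoOn (α / σ) (Ico 0 1)
  hasDerivAt_α : ∀ τ ∈ Ioo (0:ℝ) 1, HasDerivAt α (α' τ) τ
  hasDerivAt_σ : ∀ τ ∈ Ioo (0:ℝ) 1, HasDerivAt σ (σ' τ) τ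

namespace IsScheduler_s19

variable {d : ℕ} {q : EuclideanSpace ℝ (Fin d) → ℝ} {α σ α' σ' : ℝ → ℝ} {τ : ℝ}

lemma snr_zero (S : IsScheduler_s19 α σ α' σ') : (α / σ) 0 = 0 := by
  simp [S.α_zero]

lemma mapsTo_snr (S : IsScheduler_s19 α σ α' σ') : MapsTo (α / σ) (Ico 0 1) (Ici 0) := fun _ hτ =>
  S.snr_zero ▸ S.strictMonoOn_snr.monotoneOn (left_mem_Ico.2 one_pos) hτ hτ.1

lemma snr_pos (S : IsScheduler_s19 α σ α' σ') (hτ : τ ∈ Ioo 0 1) : 0 < (α / σ) τ :=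
  S.snr_zero ▸ S.strictMonoOn_snr (left_mem_Ico.2 one_pos) (Ioo_subset_Ico_self hτ) hτ.1

lemma α_pos (S : IsScheduler_s19 α σ α' σ') (hτ : τ ∈ Ioo 0 1) : 0 < α τ :=
  (div_pos_iff_of_pos_right (S.σ_pos τ (Ioo_subset_Ico_self hτ))).1 (S.snr_pos hτ)

lemma hasDerivAt_snr (S : IsScheduler_s19 α σ α' σ') (hτ : τ ∈ Ioo 0 1) :
    HasDerivAt (α / σ) ((α' τ * σ τ - α τ * σ' τ) / σ τ ^ 2) τ :=
  (S.hasDerivAt_α τ hτ).div (S.hasDerivAt_σ τ hτ) (S.σ_pos τ (Ioo_subset_Ico_self hτ)).ne'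

lemma snr_deriv_nonneg (S : IsScheduler_s19 α σ α' σ') (hτ : τ ∈ Ioo 0 1) :
    0 ≤ (α' τ * σ τ - α τ * σ' τ) / σ τ ^ 2 :=
  (S.hasDerivAt_snr hτ).nonneg_of_monotoneOn_of_mem_nhds (Ico_mem_nhds hτ.1 hτ.2)
    S.strictMonoOn_snr.monotoneOn

lemma continuousOn_snr (S : IsScheduler_s19 α σ α' σ') : ContinuousOn (α / σ) (Ico 0 1) :=
  (S.continuousOn_α.mono Ico_subset_Icc_self).div (S.continuousOn_σ.mono Ico_subset_Icc_self)
    fun τ hτ => (S.σ_pos τ hτ).ne'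

lemma tendsto_α (S : IsScheduler_s19 α σ α' σ') : Tendsto α (𝓝[Ico 0 1] 1) (𝓝 1) := by
  simpa only [S.α_one] using
    ((S.continuousOn_α 1 (right_mem_Icc.2 zero_le_one)).mono Ico_subset_Icc_self).tendsto

lemma tendsto_snr (S : IsScheduler_s19 α σ α' σ') (hσ : σ 1 = 0) :
    Tendsto (α / σ) (𝓝[Ico 0 1] 1) atTop := by
  have hσ0 : Tendsto σ (𝓝[Ico 0 1] 1) (𝓝[>] 0) :=
    tendsto_nhdsWithin_iff.2 ⟨by simpa only [hσ] using ((S.continuousOn_σ 1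
      (right_mem_Icc.2 zero_le_one)).mono Ico_subset_Icc_self).tendsto,
      eventually_nhdsWithin_of_forall S.σ_pos⟩
  exact (S.tendsto_α.pos_mul_atTop one_pos (tendsto_inv_nhdsGT_zero.comp hσ0)).congr
    fun τ => (div_eq_mul_inv _ _).symm

lemma hasDerivAt_inv_smul (hq0 : ∀ y, 0 ≤ q y) (hqint : Integrable q) (hq : ¬ q =ᵐ[volume] 0)
    (S : IsScheduler_s19 α σ α' σ') {x : ℝ → EuclideanSpace ℝ (Fin d)}
    (hx : ∀ τ ∈ Ioo (0:ℝ) 1, HasDerivAt x (margVF d q (α τ) (α' τ) (σ τ) (σ' τ) (x τ)) τ)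
    {τ : ℝ} (hτ : τ ∈ Ioo 0 1) :
    HasDerivAt (fun τ => (σ τ)⁻¹ • x τ) (((α' τ * σ τ - α τ * σ' τ) / σ τ ^ 2) •
      posteriorMean d q ((α / σ) τ) 1 ((σ τ)⁻¹ • x τ)) τ := by
  have hσ := S.σ_pos τ (Ioo_subset_Ico_self hτ)
  refine (((S.hasDerivAt_σ τ hτ).inv hσ.ne').smul (hx τ hτ)).congr_deriv ?_
  rw [margVF_eq_smul_add_smul_posteriorMean hq0 hqint hq (S.α_pos hτ) hσ.ne',
    posteriorMean_eq_snr hσ]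
  simp only [Pi.div_apply, Pi.inv_apply]
  match_scalars
  · field_simp
    ring
  · field_simp

lemma hasDerivAt_smul_comp_snr (hq0 : ∀ y, 0 ≤ q y) (hqint : Integrable q)
    (hq : ¬ q =ᵐ[volume] 0) (S : IsScheduler_s19 α σ α' σ') {W : ℝ → EuclideanSpace ℝ (Fin d)}
    {r : ℝ} (hr : r ∈ Ioo 0 1)
    (hW : HasDerivAt W (posteriorMean d q ((α / σ) r) 1 (W ((α / σ) r))) ((α / σ) r)) :
    HasDerivAt (fun r => σ r • W ((α / σ) r))
      (margVF d q (α r) (α' r) (σ r) (σ' r) (σ r • W ((α / σ) r))) r := by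
  have hσ := S.σ_pos r (Ioo_subset_Ico_self hr)
  refine ((S.hasDerivAt_σ r hr).smul (hW.scomp r (S.hasDerivAt_snr hr))).congr_deriv ?_
  rw [margVF_eq_smul_add_smul_posteriorMean hq0 hqint hq (S.α_pos hr) hσ.ne',
    posteriorMean_eq_snr hσ, inv_smul_smul₀ hσ.ne']
  simp only [Function.comp_apply, Pi.div_apply]
  match_scalars <;> field_simp

lemma exists_snr_inverse (S : IsScheduler_s19 α σ α' σ')
    (hsurj : ∀ y : ℝ, 0 ≤ y → ∃ τ ∈ Ico (0:ℝ) 1, α τ / σ τ = y) :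
    ∃ T : ℝ → ℝ, T 0 = 0 ∧ MapsTo T (Ici 0) (Ico 0 1) ∧ LeftInvOn (α / σ) T (Ici 0) ∧
      ContinuousOn T (Ici 0) ∧ Tendsto T atTop (𝓝[Ico 0 1] 1) := by
  choose! T hmaps hinv using hsurj
  have hinv' : LeftInvOn T (α / σ) (Ico 0 1) :=
    S.strictMonoOn_snr.injOn.rightInvOn_of_leftInvOn hinv S.mapsTo_snr hmaps
  have hsurjT : SurjOn T (Ici 0) (Ico 0 1) := hinv'.surjOn S.mapsTo_snr
  have hmono : StrictMonoOn T (Ici 0) := S.strictMonoOn_snr.strictMonoOn_of_leftInvOn hmaps hinv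
  have hT0 : T 0 = 0 := by simpa only [S.snr_zero] using hinv' (left_mem_Ico.2 one_pos)
  exact ⟨T, hT0, hmaps, hinv, hmono.continuousOn_Ici_of_surjOn hmaps hsurjT hT0,
    hmono.monotoneOn.tendsto_atTop_of_surjOn hmaps hsurjT⟩

lemma exists_snrFlow (hq0 : ∀ y, 0 ≤ q y) (hqint : Integrable q) (hq : ¬ q =ᵐ[volume] 0)
    (S : IsScheduler_s19 α σ α' σ') (hsurj : ∀ y : ℝ, 0 ≤ y → ∃ τ ∈ Ico (0:ℝ) 1, α τ / σ τ = y)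
    {x : ℝ → EuclideanSpace ℝ (Fin d)} (hxc : ContinuousOn x (Icc 0 1))
    (hx : ∀ τ ∈ Ioo (0:ℝ) 1, HasDerivAt x (margVF d q (α τ) (α' τ) (σ τ) (σ' τ) (x τ)) τ) :
    ∃ W : ℝ → EuclideanSpace ℝ (Fin d), W 0 = x 0 ∧ ContinuousOn W (Ici 0) ∧
      (∀ u, 0 < u → HasDerivAt W (posteriorMean d q u 1 (W u)) u) ∧
      Tendsto (fun u => u⁻¹ • W u) atTop (𝓝 (x 1)) := by
  obtain ⟨T, hT0, hmaps, hinv, hTc, hTlim⟩ := S.exists_snr_inverse hsurj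
  have hmaps' : MapsTo T (Ici 0) (Icc 0 1) := hmaps.mono_right Ico_subset_Icc_self
  refine ⟨fun u => (σ (T u))⁻¹ • x (T u), by simp [hT0, S.σ_zero], ?_, fun u hu => ?_, ?_⟩
  · exact ((S.continuousOn_σ.comp hTc hmaps').inv₀ fun u hu => (S.σ_pos _ (hmaps hu)).ne').smul
      (hxc.comp hTc hmaps')
  · have hTu : T u ∈ Ioo 0 1 := by
      refine ⟨(hmaps hu.le).1.lt_of_ne fun h => hu.ne ?_, (hmaps hu.le).2⟩
      rw [← hinv hu.le, ← h, S.snr_zero]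
    have hg : ContinuousAt (fun τ => posteriorMean d q ((α / σ) τ) 1 ((σ τ)⁻¹ • x τ)) (T u) :=
      ContinuousAt.comp (f := fun τ => ((α / σ) τ, (σ τ)⁻¹ • x τ))
        (g := fun p : ℝ × EuclideanSpace ℝ (Fin d) => posteriorMean d q p.1 1 p.2)
        (continuousAt_posteriorMean hq0 hqint hq (S.snr_pos hTu) _)
        ((S.hasDerivAt_snr hTu).continuousAt.prodMk
          (S.hasDerivAt_inv_smul hq0 hqint hq hx hTu).continuousAt)
    have hW := hasDerivAt_comp_of_rightInverse (Ioo_mem_nhds hTu.1 hTu.2)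
      (fun τ hτ => S.hasDerivAt_snr hτ) (fun τ hτ => S.snr_deriv_nonneg hτ)
      (fun τ hτ => S.hasDerivAt_inv_smul hq0 hqint hq hx hτ) hg
      (hTc.continuousAt (Ici_mem_nhds hu)) (eventually_of_mem (Ici_mem_nhds hu) hinv)
    rwa [hinv hu.le] at hW
  · have hlim := ((S.tendsto_α.comp hTlim).inv₀ one_ne_zero).smul
      ((hxc 1 (right_mem_Icc.2 zero_le_one)).tendsto.comp
        (tendsto_nhdsWithin_mono_right Ico_subset_Icc_self hTlim))
    rw [inv_one, one_smul] at hlim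
    refine hlim.congr' ?_
    filter_upwards [eventually_gt_atTop 0] with u hu
    calc (α (T u))⁻¹ • x (T u) = ((α / σ) (T u) * σ (T u))⁻¹ • x (T u) := by
          rw [Pi.div_apply, div_mul_cancel₀ _ (S.σ_pos _ (hmaps hu.le)).ne']
      _ = u⁻¹ • (σ (T u))⁻¹ • x (T u) := by rw [hinv hu.le, mul_inv, smul_smul]

lemma exists_flow_of_snrFlow (hq0 : ∀ y, 0 ≤ q y) (hqint : Integrable q)
    (hq : ¬ q =ᵐ[volume] 0) (S : IsScheduler_s19 α σ α' σ') (hσ : σ 1 = 0)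
    {W : ℝ → EuclideanSpace ℝ (Fin d)} {L : EuclideanSpace ℝ (Fin d)}
    (hWc : ContinuousOn W (Ici 0)) (hW : ∀ u, 0 < u → HasDerivAt W (posteriorMean d q u 1 (W u)) u)
    (hWlim : Tendsto (fun u => u⁻¹ • W u) atTop (𝓝 L)) :
    ∃ z : ℝ → EuclideanSpace ℝ (Fin d), z 0 = W 0 ∧ z 1 = L ∧ ContinuousOn z (Icc 0 1) ∧
      ∀ r ∈ Ioo (0:ℝ) 1, HasDerivAt z (margVF d q (α r) (α' r) (σ r) (σ' r) (z r)) r := by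
  set z := fun r => σ r • W ((α / σ) r)
  have hzc : ContinuousOn z (Ico 0 1) :=
    (S.continuousOn_σ.mono Ico_subset_Icc_self).smul (hWc.comp S.continuousOn_snr S.mapsTo_snr)
  have hzlim : Tendsto z (𝓝[Ico 0 1] 1) (𝓝 L) := by
    have hlim := S.tendsto_α.smul (hWlim.comp (S.tendsto_snr hσ))
    rw [one_smul] at hlim
    refine hlim.congr' ?_
    filter_upwards [inter_mem_nhdsWithin (Ico 0 1) (Ioi_mem_nhds one_pos)] with r ⟨hr, hr0⟩
    have hαr := S.α_pos (show r ∈ Ioo 0 1 from ⟨hr0, hr.2⟩)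
    simp only [z, Function.comp_apply, Pi.div_apply, smul_smul]
    congr 1
    field_simp
  refine ⟨Function.update z 1 L, ?_, Function.update_self .., fun r hr => ?_, fun r hr => ?_⟩
  · simp [z, S.α_zero, S.σ_zero]
  · rcases hr.2.eq_or_lt with rfl | hr1
    · rwa [continuousWithinAt_update_same, Icc_sdiff_right]
    · have hIco : Ico (0:ℝ) 1 ∈ 𝓝[Icc 0 1] r :=
        mem_nhdsWithin.2 ⟨Iio 1, isOpen_Iio, hr1, fun y hy => ⟨hy.2.1, hy.1⟩⟩
      exact ((hzc r ⟨hr.1, hr1⟩).congr (fun y hy => Function.update_of_ne hy.2.ne _ _)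
        (Function.update_of_ne hr1.ne _ _)).mono_of_mem_nhdsWithin hIco
  · rw [Function.update_of_ne hr.2.ne]
    exact (S.hasDerivAt_smul_comp_snr hq0 hqint hq hr (hW _ (S.snr_pos hr))).congr_of_eventuallyEq
      ((Function.update_eventuallyEq z 1 L).filter_mono
        (le_principal_iff.2 (compl_singleton_mem_nhds hr.2.ne)))

end IsScheduler_s19

theorem gaussian_paths_same_coupling_general (d : ℕ)
    (q : EuclideanSpace ℝ (Fin d) → ℝ) (hq0 : ∀ y, 0 ≤ q y) (hqint : Integrable q)
    (α σ α' σ' αb σb αb' σb' : ℝ → ℝ)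
    -- scheduler (α, σ)
    (hαc : ContinuousOn α (Icc 0 1)) (hσc : ContinuousOn σ (Icc 0 1))
    (hα0 : α 0 = 0) (hα1 : α 1 = 1) (hσ0 : σ 0 = 1)
    (hσpos : ∀ τ ∈ Ico (0:ℝ) 1, 0 < σ τ)
    (hsnr : StrictMonoOn (fun τ => α τ / σ τ) (Ico (0:ℝ) 1))
    (hsurj : ∀ y : ℝ, 0 ≤ y → ∃ τ ∈ Ico (0:ℝ) 1, α τ / σ τ = y)
    (hα : ∀ τ ∈ Ioo (0:ℝ) 1, HasDerivAt α (α' τ) τ)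
    (hσ : ∀ τ ∈ Ioo (0:ℝ) 1, HasDerivAt σ (σ' τ) τ)
    -- scheduler (ᾱ, σ̄)
    (hαbc : ContinuousOn αb (Icc 0 1)) (hσbc : ContinuousOn σb (Icc 0 1))
    (hαb0 : αb 0 = 0) (hσb1 : σb 1 = 0) (hαb1 : αb 1 = 1) (hσb0 : σb 0 = 1)
    (hσbpos : ∀ r ∈ Ico (0:ℝ) 1, 0 < σb r)
    (hsnrb : StrictMonoOn (fun r => αb r / σb r) (Ico (0:ℝ) 1))
    (hαb : ∀ r ∈ Ioo (0:ℝ) 1, HasDerivAt αb (αb' r) r)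
    (hσb : ∀ r ∈ Ioo (0:ℝ) 1, HasDerivAt σb (σb' r) r)
    -- the two flows, started from the same noise point x₀
    (x xb : ℝ → EuclideanSpace ℝ (Fin d)) (x₀ : EuclideanSpace ℝ (Fin d))
    (hxc : ContinuousOn x (Icc 0 1)) (hxbc : ContinuousOn xb (Icc 0 1))
    (hx : ∀ τ ∈ Ioo (0:ℝ) 1,
      HasDerivAt x (margVF d q (α τ) (α' τ) (σ τ) (σ' τ) (x τ)) τ)
    (hxb : ∀ r ∈ Ioo (0:ℝ) 1,
      HasDerivAt xb (margVF d q (αb r) (αb' r) (σb r) (σb' r) (xb r)) r)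
    (hx0 : x 0 = x₀) (hxb0 : xb 0 = x₀)
    -- uniqueness of solutions of the (ᾱ, σ̄) flow
    (huniq : ∀ y z : ℝ → EuclideanSpace ℝ (Fin d),
      ContinuousOn y (Icc 0 1) → ContinuousOn z (Icc 0 1) →
      (∀ r ∈ Ioo (0:ℝ) 1,
        HasDerivAt y (margVF d q (αb r) (αb' r) (σb r) (σb' r) (y r)) r) →
      (∀ r ∈ Ioo (0:ℝ) 1,
        HasDerivAt z (margVF d q (αb r) (αb' r) (σb r) (σb' r) (z r)) r) →
      y 0 = z 0 → y 1 = z 1) :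
    xb 1 = x 1 := by
  have S : IsScheduler_s19 α σ α' σ' := ⟨hαc, hσc, hα0, hα1, hσ0, hσpos, hsnr, hα, hσ⟩
  have Sb : IsScheduler_s19 αb σb αb' σb' :=
    ⟨hαbc, hσbc, hαb0, hαb1, hσb0, hσbpos, hsnrb, hαb, hσb⟩
  by_cases hq : q =ᵐ[volume] 0
  · refine huniq xb x hxbc hxc hxb (fun r hr => ?_) (hxb0.trans hx0.symm)
    simpa only [margVF_of_ae_eq_zero hq] using hx r hr
  obtain ⟨W, hW0, hWc, hW, hWlim⟩ := S.exists_snrFlow hq0 hqint hq hsurj hxc hx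
  obtain ⟨z, hz0, hz1, hzc, hz⟩ := Sb.exists_flow_of_snrFlow hq0 hqint hq hσb1 hWc hW hWlim
  rw [← hz1]
  exact huniq xb z hxbc hzc hxb hz (by rw [hxb0, hz0, hW0, hx0])

/-- All Gaussian-path schedulers induce the same noise-to-data coupling: if `x` and `x̄`
are the flows of the marginal velocity fields of two schedulers `(α, σ)` and `(ᾱ, σ̄)`
(with the same data density `q`) started from the same noise point `x₀`, and solutions of
the `(ᾱ, σ̄)` flow are unique, then `x̄(1) = x(1)`. -/
theorem gaussian_paths_same_coupling (d : ℕ)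
    (q : EuclideanSpace ℝ (Fin d) → ℝ) (hq0 : ∀ y, 0 ≤ q y) (hqint : Integrable q)
    (α σ α' σ' αb σb αb' σb' : ℝ → ℝ)
    -- scheduler (α, σ)
    (hαc : ContinuousOn α (Icc 0 1)) (hσc : ContinuousOn σ (Icc 0 1))
    (hα0 : α 0 = 0) (hσ1 : σ 1 = 0) (hα1 : α 1 = 1) (hσ0 : σ 0 = 1)
    (hσpos : ∀ τ ∈ Ico (0:ℝ) 1, 0 < σ τ)
    (hsnr : StrictMonoOn (fun τ => α τ / σ τ) (Ico (0:ℝ) 1))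
    (hsurj : ∀ y : ℝ, 0 ≤ y → ∃ τ ∈ Ico (0:ℝ) 1, α τ / σ τ = y)
    (hα : ∀ τ ∈ Ioo (0:ℝ) 1, HasDerivAt α (α' τ) τ)
    (hσ : ∀ τ ∈ Ioo (0:ℝ) 1, HasDerivAt σ (σ' τ) τ)
    -- scheduler (ᾱ, σ̄)
    (hαbc : ContinuousOn αb (Icc 0 1)) (hσbc : ContinuousOn σb (Icc 0 1))
    (hαb0 : αb 0 = 0) (hσb1 : σb 1 = 0) (hαb1 : αb 1 = 1) (hσb0 : σb 0 = 1)
    (hσbpos : ∀ r ∈ Ico (0:ℝ) 1, 0 < σb r)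
    (hsnrb : StrictMonoOn (fun r => αb r / σb r) (Ico (0:ℝ) 1))
    (hαb : ∀ r ∈ Ioo (0:ℝ) 1, HasDerivAt αb (αb' r) r)
    (hσb : ∀ r ∈ Ioo (0:ℝ) 1, HasDerivAt σb (σb' r) r)
    -- the two flows, started from the same noise point x₀
    (x xb : ℝ → EuclideanSpace ℝ (Fin d)) (x₀ : EuclideanSpace ℝ (Fin d))
    (hxc : ContinuousOn x (Icc 0 1)) (hxbc : ContinuousOn xb (Icc 0 1))
    (hx : ∀ τ ∈ Ioo (0:ℝ) 1,
      HasDerivAt x (margVF d q (α τ) (α' τ) (σ τ) (σ' τ) (x τ)) τ)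
    (hxb : ∀ r ∈ Ioo (0:ℝ) 1,
      HasDerivAt xb (margVF d q (αb r) (αb' r) (σb r) (σb' r) (xb r)) r)
    (hx0 : x 0 = x₀) (hxb0 : xb 0 = x₀)
    -- uniqueness of solutions of the (ᾱ, σ̄) flow
    (huniq : ∀ y z : ℝ → EuclideanSpace ℝ (Fin d),
      ContinuousOn y (Icc 0 1) → ContinuousOn z (Icc 0 1) →
      (∀ r ∈ Ioo (0:ℝ) 1,
        HasDerivAt y (margVF d q (αb r) (αb' r) (σb r) (σb' r) (y r)) r) →
      (∀ r ∈ Ioo (0:ℝ) 1,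
        HasDerivAt z (margVF d q (αb r) (αb' r) (σb r) (σb' r) (z r)) r) →
      y 0 = z 0 → y 1 = z 1) :
    xb 1 = x 1 :=
  gaussian_paths_same_coupling_general d q hq0 hqint α σ α' σ' αb σb αb' σb' hαc hσc hα0 hα1 hσ0
    hσpos hsnr hsurj hα hσ hαbc hσbc hαb0 hσb1 hαb1 hσb0 hσbpos hsnrb hαb hσb x xb x₀ hxc hxbc hx
    hxb hx0 hxb0 huniq
end
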